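/- Let V be a finite-dimensional representation of a finite group G over F_q satisfying the following assumption: there is an involution g ↦ g^ι of G and a non-degenerate symmetric bilinear form b : V × V → F_q with b(gx, g^ι y) = b(x,y) for all x,y ∈ V and g ∈ G. Identify V with its dual via b, let O_1, …, O_r be the G-orbits on V, let e_i be the indicator function of O_i, and define the Fourier transform \hatφ(y) = |V|^{-1} Σ_{x∈V} φ(x) exp(2π√(-1) · Tr_{F_q/F_p}(b(x,y))/p). Then for every F_q-subspace W of V, with W^⊥ = {y ∈ V : b(x,y) = 0 for all x ∈ W}, one has Σ_{i=1}^{r} (|O_i ∩ W|/|O_i|) · \hat{e_i} = (|W|/|V|) · Σ_{i=1}^{r} (|O_i ∩ W^⊥|/|O_i|) · e_i as functions on V. -/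

import Mathlib

open scoped Classical

noncomputable section

/-- The standard additive character `t ↦ exp(2πi·Tr_{F/F_p}(t)/p)` of a finite field `F`
of characteristic `p`. -/
def psiF (p : ℕ) [Fact p.Prime] (F : Type*) [Field F] [Fintype F] [CharP F p] (t : F) : ℂ :=
  letI : Algebra (ZMod p) F := ZMod.algebra F p
  Complex.exp (2 * Real.pi * Complex.I * ((Algebra.trace (ZMod p) F t).val : ℂ) / (p : ℂ))

/-- The Fourier transform attached to a bilinear form `b` on a finite `F`-vector space `V`:
`\hatφ(y) = |V|⁻¹ ∑_x φ(x) exp(2πi·Tr(b(x,y))/p)`. -/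
def FTgen {F : Type*} [Field F] [Fintype F] (p : ℕ) [Fact p.Prime] [CharP F p]
    {V : Type*} [AddCommGroup V] [Module F V] [Fintype V]
    (b : V →ₗ[F] V →ₗ[F] F) (φ : V → ℂ) (y : V) : ℂ :=
  (Fintype.card V : ℂ)⁻¹ * ∑ x : V, φ x * psiF p F (b x y)

/-!
Writing the orbit average of `1_W` as the group average `|G|⁻¹ ∑_g 1_W(g • x)`, the Fourier
transform of each translate is `\hat{1_W}(g^ι • z)` by the invariance of `b`, and
`\hat{1_W} = (|W|/|V|) · 1_{W^⊥}` because a nontrivial additive character sums to zero on `W`.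
Since `ι` is a bijection of `G`, averaging `1_{W^⊥}(g^ι • z)` over `g` gives the orbit average
of `1_{W^⊥}` at `z`.
-/

open MulAction

section OrbitAverage

variable {G X : Type*} [Group G] [Fintype G] [MulAction G X]

/-- Double counting of the pairs `(g, y) ∈ G × Gx`, using that every `g` permutes the orbit. -/
lemma card_orbit_smul_sum_smul {M : Type*} [AddCommMonoid M] (x : X) [Fintype (orbit G x)]
    (f : X → M) :
    Fintype.card (orbit G x) • ∑ g : G, f (g • x) = Fintype.card G • ∑ y : orbit G x, f y := by
  have hconst : ∀ y : orbit G x, ∑ g : G, f (g • (y : X)) = ∑ g : G, f (g • x) := by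
    rintro ⟨_, h, rfl⟩
    exact Fintype.sum_equiv (Equiv.mulRight h) _ _ fun g => by simp [mul_smul]
  have hperm : ∀ g : G, ∑ y : orbit G x, f (g • (y : X)) = ∑ y : orbit G x, f y := fun g =>
    Fintype.sum_equiv (toPerm g) _ _ fun _ => rfl
  calc Fintype.card (orbit G x) • ∑ g : G, f (g • x)
      = ∑ y : orbit G x, ∑ g : G, f (g • (y : X)) := by simp [hconst]
    _ = ∑ g : G, ∑ y : orbit G x, f (g • (y : X)) := Finset.sum_comm
    _ = Fintype.card G • ∑ y : orbit G x, f y := by simp [hperm]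

lemma card_orbit_inter_div_card_orbit {K : Type*} [Field K] [CharZero K] [Finite X]
    (x : X) (S : Set X) :
    (Nat.card ↥(orbit G x ∩ S) : K) / Nat.card (orbit G x)
      = (Fintype.card G : K)⁻¹ * ∑ g : G, S.indicator 1 (g • x) := by
  have : Fintype X := Fintype.ofFinite X
  have hcount := card_orbit_smul_sum_smul (G := G) (M := K) x (S.indicator 1)
  have hsum : ∑ y : orbit G x, S.indicator (1 : X → K) y = Nat.card ↥(orbit G x ∩ S) := by
    rw [← Finset.sum_toFinset_eq_subtype (· ∈ orbit G x), Finset.sum_indicator_eq_sum_filter]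
    simp only [Pi.one_apply, Finset.sum_const, nsmul_one, Nat.card_eq_card_toFinset,
      Set.toFinset_inter, ← Finset.filter_mem_eq_inter, Set.mem_toFinset, Set.ofPred_mem_eq]
  have hO : (Fintype.card (orbit G x) : K) ≠ 0 := by
    have : Nonempty (orbit G x) := ⟨⟨x, mem_orbit_self x⟩⟩
    exact_mod_cast Fintype.card_ne_zero
  have hG : (Fintype.card G : K) ≠ 0 := by exact_mod_cast Fintype.card_ne_zero
  rw [← hsum, Nat.card_eq_fintype_card]
  field_simp
  simp only [nsmul_eq_mul] at hcount
  linear_combination hcount.symm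

end OrbitAverage

section Character

variable (p : ℕ) [Fact p.Prime] (F : Type*) [Field F] [Fintype F] [CharP F p]

def psiChar : AddChar F ℂ :=
  let : Algebra (ZMod p) F := ZMod.algebra F p
  (AddChar.zmodChar p ((Complex.isPrimitiveRoot_exp p (Fact.out : p.Prime).ne_zero).pow_eq_one))
    |>.compAddMonoidHom (Algebra.trace (ZMod p) F).toAddMonoidHom

lemma psiChar_apply (t : F) : psiChar p F t = psiF p F t := by
  let : Algebra (ZMod p) F := ZMod.algebra F p
  simp only [psiChar, psiF, AddChar.compAddMonoidHom_apply, LinearMap.toAddMonoidHom_coe,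
    AddChar.zmodChar_apply, ← Complex.exp_nat_mul]
  congr 1
  field_simp

lemma psiChar_ne_zero : psiChar p F ≠ 0 := by
  let : Algebra (ZMod p) F := ZMod.algebra F p
  obtain ⟨t, ht⟩ := Algebra.trace_surjective (ZMod p) F 1
  refine AddChar.ne_zero_iff.mpr ⟨t, ?_⟩
  simp only [psiChar, AddChar.compAddMonoidHom_apply, LinearMap.toAddMonoidHom_coe,
    AddChar.zmodChar_apply, ht, ZMod.val_one, pow_one]
  exact (Complex.isPrimitiveRoot_exp p (Fact.out : p.Prime).ne_zero).ne_one
    (Fact.out : p.Prime).one_lt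

variable {F}

lemma sum_psiF_linearMap {M : Type*} [AddCommGroup M] [Module F M] [Fintype M]
    (f : M →ₗ[F] F) :
    ∑ m, psiF p F (f m) = if f = 0 then (Fintype.card M : ℂ) else 0 := by
  set χ := (psiChar p F).compAddMonoidHom f.toAddMonoidHom
  have hχ : χ = 0 ↔ f = 0 := by
    refine ⟨fun h => by_contra fun hf => ?_, fun hf => ?_⟩
    · obtain ⟨t, ht⟩ := AddChar.ne_zero_iff.mp (psiChar_ne_zero p F)
      obtain ⟨m, rfl⟩ := LinearMap.surjective_of_ne_zero hf t
      exact ht (DFunLike.congr_fun h m)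
    · ext m
      simp [χ, hf]
  simp only [← psiChar_apply, ← hχ]
  exact AddChar.sum_eq_ite χ

end Character

section Fourier

variable (p : ℕ) [Fact p.Prime] {F : Type*} [Field F] [Fintype F] [CharP F p]
  {V : Type*} [AddCommGroup V] [Module F V] [Fintype V] (b : V →ₗ[F] V →ₗ[F] F)

lemma FTgen_const_mul_sum {α : Type*} (s : Finset α) (c : ℂ) (φ : α → V → ℂ) (z : V) :
    FTgen p b (fun x => c * ∑ i ∈ s, φ i x) z = c * ∑ i ∈ s, FTgen p b (φ i) z := by
  simp only [FTgen, Finset.mul_sum, Finset.sum_mul]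
  rw [Finset.sum_comm]
  exact Finset.sum_congr rfl fun i _ => Finset.sum_congr rfl fun x _ => by ring

lemma FTgen_comp_smul {G : Type*} [Group G] [MulAction G V] {ι : G → G}
    (hb : ∀ (g : G) (x y : V), b (g • x) (ι g • y) = b x y) (φ : V → ℂ) (g : G) (z : V) :
    FTgen p b (fun x => φ (g • x)) z = FTgen p b φ (ι g • z) := by
  unfold FTgen
  congr 1
  refine Fintype.sum_equiv (toPerm g) _ _ fun x => ?_
  rw [toPerm_apply, ← hb g x z]

lemma FTgen_indicator_submodule (W : Submodule F V) (z : V) :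
    FTgen p b ((W : Set V).indicator 1) z
      = (Nat.card W / Fintype.card V) * (W.orthogonalBilin b : Set V).indicator 1 z := by
  have hsum : ∑ x, (W : Set V).indicator 1 x * psiF p F (b x z) = ∑ w : W, psiF p F (b w z) := by
    simp only [Set.indicator_apply, SetLike.mem_coe, Pi.one_apply, ite_mul, one_mul, zero_mul]
    rw [← Finset.sum_filter, Finset.sum_subtype (p := (· ∈ W)) _ fun x => by simp]
  have horth : (b.flip z).comp W.subtype = 0 ↔ z ∈ W.orthogonalBilin b := by
    simp [LinearMap.ext_iff, Submodule.mem_orthogonalBilin_iff]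
  have := sum_psiF_linearMap p ((b.flip z).comp W.subtype)
  simp only [LinearMap.comp_apply, Submodule.subtype_apply, LinearMap.flip_apply, horth] at this
  rw [FTgen, hsum, this, Set.indicator_apply, SetLike.mem_coe]
  split_ifs <;> simp [Nat.card_eq_fintype_card, div_eq_inv_mul]

end Fourier

-- Pointwise form: at `z`, the function `∑ᵢ cᵢ e_i` takes the value `cᵢ` of the orbit of `z`.
theorem stmt3_general {F : Type*} [Field F] [Fintype F] (p : ℕ) [Fact p.Prime] [CharP F p]
    {V : Type*} [AddCommGroup V] [Module F V] [Fintype V]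
    {G : Type*} [Group G] [Finite G] [DistribMulAction G V]
    (ι : G → G) (hinv : Function.Involutive ι)
    (b : V →ₗ[F] V →ₗ[F] F)
    (hequiv : ∀ (g : G) (x y : V), b (g • x) (ι g • y) = b x y)
    (W : Submodule F V) (z : V) :
    FTgen p b (fun x => (Nat.card ↥(MulAction.orbit G x ∩ (W : Set V)) : ℂ) /
        (Nat.card ↥(MulAction.orbit G x) : ℂ)) z
      = ((Nat.card ↥W : ℂ) / (Fintype.card V : ℂ)) *
          ((Nat.card ↥(MulAction.orbit G z ∩ {y : V | ∀ x ∈ W, b x y = 0}) : ℂ) /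
            (Nat.card ↥(MulAction.orbit G z) : ℂ)) := by
  have : Fintype G := Fintype.ofFinite G
  have hWperp : {y : V | ∀ x ∈ W, b x y = 0} = W.orthogonalBilin b := rfl
  set S : Set V := (W.orthogonalBilin b : Set V)
  simp only [card_orbit_inter_div_card_orbit, hWperp, FTgen_const_mul_sum,
    FTgen_comp_smul p b hequiv, FTgen_indicator_submodule, ← Finset.mul_sum]
  rw [Fintype.sum_equiv (hinv.toPerm ι) (fun g => S.indicator 1 (ι g • z))
    (fun g => S.indicator 1 (g • z)) fun _ => rfl]
  ring

/-- for any subspace `W`,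
`∑ᵢ (|Oᵢ ∩ W|/|Oᵢ|)·ê_i = (|W|/|V|)·∑ᵢ (|Oᵢ ∩ W^⊥|/|Oᵢ|)·e_i`, formulated pointwise
(at a point `z`, the sum `∑ᵢ cᵢ e_i` takes the value `c_{i(z)}` for the orbit of `z`). -/
theorem stmt3 {F : Type*} [Field F] [Fintype F] (p : ℕ) [Fact p.Prime] [CharP F p]
    {V : Type*} [AddCommGroup V] [Module F V] [Fintype V]
    {G : Type*} [Group G] [Finite G] [DistribMulAction G V] [SMulCommClass G F V]
    (ι : G → G) (hinv : Function.Involutive ι) (hhom : ∀ g h : G, ι (g * h) = ι g * ι h)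
    (b : V →ₗ[F] V →ₗ[F] F)
    (hsymm : ∀ x y : V, b x y = b y x)
    (hnd : ∀ y : V, (∀ x : V, b x y = 0) → y = 0)
    (hequiv : ∀ (g : G) (x y : V), b (g • x) (ι g • y) = b x y)
    (W : Submodule F V) (z : V) :
    FTgen p b (fun x => (Nat.card ↥(MulAction.orbit G x ∩ (W : Set V)) : ℂ) /
        (Nat.card ↥(MulAction.orbit G x) : ℂ)) z
      = ((Nat.card ↥W : ℂ) / (Fintype.card V : ℂ)) *
          ((Nat.card ↥(MulAction.orbit G z ∩ {y : V | ∀ x ∈ W, b x y = 0}) : ℂ) /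
            (Nat.card ↥(MulAction.orbit G z) : ℂ)) :=
  stmt3_general p ι hinv b hequiv W z
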